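/- arXiv:2002.06006 — 4 statements merged into one kernel-verified Lean document; each statement's English description precedes it below -/
import Mathlib

section
/- Let k ≥ 1 and K = {z ∈ (Fin k → ℝ) : zᵢ ≥ 0 for all i} \ {0}; for B ⊆ (Fin k → ℝ) write B − K = {b − z : b ∈ B, z ∈ K}. Let U be a set, 𝒵 a nonempty set, Ĵ : U → 𝒵 → (Fin k → ℝ), η > 0 a real, c ∈ (Fin k → ℝ), and Ĵ' (u) (α) = η • Ĵ u α + c. Write Ĵ_𝒵(u) = {Ĵ u α : α ∈ 𝒵} and Ĵ'_𝒵(u) = {Ĵ' u α : α ∈ 𝒵}. Then ū ∈ U is set-based minmax robust efficient for Ĵ (i.e., there is no u' ∈ U with u' ≠ ū and Ĵ_𝒵(u') ⊆ Ĵ_𝒵(ū) − K) if and only if ū is set-based minmax robust efficient for Ĵ'. -/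
/-- The nonnegative orthant of `ℝ^k` with the origin removed. -/
def orthantK (k : ℕ) : Set (Fin k → ℝ) :=
  {z : Fin k → ℝ | ∀ i, 0 ≤ z i} \ {0}

/-- Minkowski difference `B − K` of a set `B ⊆ ℝ^k` with the punctured
nonnegative orthant `K`. -/
def minusK (k : ℕ) (B : Set (Fin k → ℝ)) : Set (Fin k → ℝ) :=
  {x | ∃ b ∈ B, ∃ z ∈ orthantK k, x = b - z}

lemma orthantK_smul {k : ℕ} {η : ℝ} (hη : 0 < η) {z : Fin k → ℝ}
    (hz : z ∈ orthantK k) : η • z ∈ orthantK k := by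
  obtain ⟨h1, h2⟩ := hz
  refine ⟨fun i => mul_nonneg hη.le (h1 i), ?_⟩
  simp only [Set.mem_singleton_iff] at h2 ⊢
  intro h
  apply h2
  funext i
  have := congrFun h i
  simpa [hη.ne'] using this

lemma key_subset {𝒵 : Type*} (k : ℕ) {η : ℝ} (hη : 0 < η) (c : Fin k → ℝ)
    (f g : 𝒵 → Fin k → ℝ)
    (h : {y | ∃ α : 𝒵, y = f α} ⊆ minusK k {y | ∃ α : 𝒵, y = g α}) :
    {y | ∃ α : 𝒵, y = η • f α + c} ⊆
      minusK k {y | ∃ α : 𝒵, y = η • g α + c} := by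
  rintro y ⟨α, rfl⟩
  obtain ⟨b, ⟨β, rfl⟩, z, hz, hfz⟩ := h ⟨α, rfl⟩
  refine ⟨η • g β + c, ⟨β, rfl⟩, η • z, orthantK_smul hη hz, ?_⟩
  rw [hfz]
  funext i
  simp [mul_sub]
  ring

/-- Set-based minmax robust efficiency is invariant under a common componentwise
positive affine transformation `Jhat' u α = η • Jhat u α + c` (with `η > 0`) of
all objective values: `ū` is efficient for `Jhat` iff it is efficient for `Jhat'`. -/
theorem sbr_efficiency_invariant_under_affine {U : Type*} {𝒵 : Type*} [Nonempty 𝒵]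
    (k : ℕ) (hk : 1 ≤ k)
    (Jhat : U → 𝒵 → Fin k → ℝ) (η : ℝ) (hη : 0 < η) (c : Fin k → ℝ)
    (Jhat' : U → 𝒵 → Fin k → ℝ) (hJ' : ∀ u α, Jhat' u α = η • Jhat u α + c)
    (ubar : U) :
    (¬ ∃ u' : U, u' ≠ ubar ∧
        {y | ∃ α : 𝒵, y = Jhat u' α} ⊆ minusK k {y | ∃ α : 𝒵, y = Jhat ubar α}) ↔
    (¬ ∃ u' : U, u' ≠ ubar ∧
        {y | ∃ α : 𝒵, y = Jhat' u' α} ⊆ minusK k {y | ∃ α : 𝒵, y = Jhat' ubar α}) := by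
  constructor
  · rintro h ⟨u', hne, hsub⟩
    refine h ⟨u', hne, ?_⟩
    have hinv : ∀ u α, Jhat u α = η⁻¹ • Jhat' u α + (-(η⁻¹ • c)) := by
      intro u α
      rw [hJ']
      funext i
      simp [hη.ne']
    have := key_subset k (inv_pos.mpr hη) (-(η⁻¹ • c)) (Jhat' u') (Jhat' ubar) hsub
    simpa [← hinv] using this
  · rintro h ⟨u', hne, hsub⟩
    refine h ⟨u', hne, ?_⟩
    have := key_subset k hη c (Jhat u') (Jhat ubar) hsub
    simpa [← hJ'] using this
end

section
/- Let X be a type and ≺ a transitive and irreflexive relation on X (domination). Define the archive update A := ArchiveUpdate(P, A₀) to process the elements p of a finite list P one at a time starting from A := A₀: p is added to the current archive A if no a ∈ A satisfies a ≺ p, and afterwards every a ∈ A with p ≺ a is removed from A. Given finite lists P₁, …, P_l of elements of X, define A₁ = ArchiveUpdate(P₁, ∅) and A_{i+1} = ArchiveUpdate(P_{i+1}, A_i), and let C_l = ⋃_{i=1}^{l} P_i (as a set). Then A_l = {x ∈ C_l : there is no y ∈ C_l with y ≺ x}; i.e., after processing the first l populations, the archive consists exactly of the elements of the cumulative sample set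 that are nondominated within it, regardless of the order in which elements are processed. -/
/-- One step of the archiver `ArchiveUpdateℛ`: the candidate `p` is added to the
current archive `A` if no `a ∈ A` dominates `p` (`r a p`), and afterwards every
element dominated by `p` is removed. -/
def archiveStep {X : Type*} (r : X → X → Prop) (A : Set X) (p : X) : Set X :=
  {x ∈ A ∪ {y | y = p ∧ ∀ a ∈ A, ¬ r a p} | ¬ r p x}

/-- The archiver `ArchiveUpdateℛ(P, A₀)`: the elements of the finite list `P` are
processed one at a time, starting from the archive `A₀`. -/
def archiveUpdate {X : Type*} (r : X → X → Prop) (P : List X) (A₀ : Set X) : Set X :=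
  P.foldl (archiveStep r) A₀

section Aux

variable {X : Type*} (r : X → X → Prop)

/-- Nondominated subset of a finite set, viewed as a `Set`. -/
def ndSet (s : Finset X) : Set X := {x | x ∈ s ∧ ∀ y ∈ s, ¬ r y x}

variable {r}

lemma mem_archiveStep {A : Set X} {p x : X} :
    x ∈ archiveStep r A p ↔ (x ∈ A ∨ (x = p ∧ ∀ a ∈ A, ¬ r a p)) ∧ ¬ r p x := by
  simp [archiveStep, Set.mem_setOf_eq, Set.mem_union]

/-- In a finite set, any element is reached-or-equal from some nondominated element. -/
lemma exists_nd (htrans : Transitive r) (hirr : Irreflexive r) :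
    ∀ (s : Finset X) (x : X), x ∈ s →
      ∃ m ∈ s, (r m x ∨ m = x) ∧ ∀ z ∈ s, ¬ r z m := by
  classical
  intro s
  induction s using Finset.strongInductionOn with
  | _ s ih =>
    intro x hx
    by_cases h : ∃ z ∈ s, r z x
    · obtain ⟨z, hz, hzx⟩ := h
      have hzne : z ≠ x := fun e => hirr x (e ▸ hzx)
      have hz' : z ∈ s.erase x := Finset.mem_erase.2 ⟨hzne, hz⟩
      obtain ⟨m, hm, hmz, hmin⟩ := ih (s.erase x) (Finset.erase_ssubset hx) z hz'
      have hmx : r m x := by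
        rcases hmz with h' | h'
        · exact htrans h' hzx
        · exact h' ▸ hzx
      refine ⟨m, Finset.mem_of_mem_erase hm, Or.inl hmx, ?_⟩
      intro w hw hwm
      rcases eq_or_ne w x with rfl | hne
      · exact hirr m (htrans hmx hwm)
      · exact hmin w (Finset.mem_erase.2 ⟨hne, hw⟩) hwm
    · exact ⟨x, hx, Or.inr rfl, fun z hz hzx => h ⟨z, hz, hzx⟩⟩

lemma step_nd [DecidableEq X] (htrans : Transitive r) (hirr : Irreflexive r)
    (s : Finset X) (p : X) :
    archiveStep r (ndSet r s) p = ndSet r (insert p s) := by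
  ext x
  rw [mem_archiveStep]
  constructor
  · rintro ⟨hx | ⟨rfl, hnd⟩, hpx⟩
    · obtain ⟨hxs, hxnd⟩ := hx
      exact ⟨Finset.mem_insert_of_mem hxs, by
        intro y hy
        rcases Finset.mem_insert.1 hy with rfl | hy'
        · exact hpx
        · exact hxnd y hy'⟩
    · refine ⟨Finset.mem_insert_self _ _, ?_⟩
      intro y hy hyx
      rcases Finset.mem_insert.1 hy with rfl | hy'
      · exact hirr y hyx
      · obtain ⟨m, hm, hmy, hmnd⟩ := exists_nd htrans hirr s y hy'
        have hmx : r m x := by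
          rcases hmy with h' | h'
          · exact htrans h' hyx
          · exact h' ▸ hyx
        exact hnd m ⟨hm, hmnd⟩ hmx
  · rintro ⟨hx, hnd⟩
    have hpx : ¬ r p x := hnd p (Finset.mem_insert_self _ _)
    rcases Finset.mem_insert.1 hx with rfl | hx'
    · by_cases hxs : x ∈ s
      · exact ⟨Or.inl ⟨hxs, fun y hy => hnd y (Finset.mem_insert_of_mem hy)⟩, hpx⟩
      · exact ⟨Or.inr ⟨rfl, fun a ha => hnd a (Finset.mem_insert_of_mem ha.1)⟩, hpx⟩
    · exact ⟨Or.inl ⟨hx', fun y hy => hnd y (Finset.mem_insert_of_mem hy)⟩, hpx⟩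

lemma ndSet_congr {s t : Finset X} (h : ∀ x, x ∈ s ↔ x ∈ t) :
    ndSet r s = ndSet r t := by
  have : s = t := Finset.ext h
  rw [this]

lemma update_nd [DecidableEq X] (htrans : Transitive r) (hirr : Irreflexive r) :
    ∀ (L : List X) (s : Finset X),
      archiveUpdate r L (ndSet r s) = ndSet r (s ∪ L.toFinset) := by
  intro L
  induction L with
  | nil =>
      intro s
      simp [archiveUpdate, ndSet]
  | cons p L ih =>
      intro s
      have : archiveUpdate r (p :: L) (ndSet r s)
          = archiveUpdate r L (archiveStep r (ndSet r s) p) := rfl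
      rw [this, step_nd htrans hirr, ih]
      apply ndSet_congr
      intro x
      simp only [Finset.mem_union, Finset.mem_insert, List.mem_toFinset,
        List.mem_cons]
      tauto

end Aux

/-- After processing the populations `P 1, …, P l`, the archive consists exactly
of those elements of the cumulative sample set `C_l = ⋃_{i=1}^{l} P i` that are
nondominated within `C_l`. -/
theorem archive_eq_nondominated {X : Type*} (r : X → X → Prop)
    (htrans : Transitive r) (hirr : Irreflexive r)
    (P : ℕ → List X) (A : ℕ → Set X)
    (hA1 : A 1 = archiveUpdate r (P 1) (∅ : Set X))
    (hAs : ∀ i, 1 ≤ i → A (i + 1) = archiveUpdate r (P (i + 1)) (A i))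
    (l : ℕ) (hl : 1 ≤ l) :
    A l = {x | (∃ i, 1 ≤ i ∧ i ≤ l ∧ x ∈ P i) ∧
            ¬ ∃ y, (∃ i, 1 ≤ i ∧ i ≤ l ∧ y ∈ P i) ∧ r y x} := by
  classical
  set C : ℕ → Finset X := fun l => (Finset.Icc 1 l).biUnion (fun i => (P i).toFinset) with hC
  have hmemC : ∀ l x, x ∈ C l ↔ ∃ i, 1 ≤ i ∧ i ≤ l ∧ x ∈ P i := by
    intro l x
    simp [hC, Finset.mem_biUnion, Finset.mem_Icc, List.mem_toFinset]
    tauto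
  have key : ∀ l, 1 ≤ l → A l = ndSet r (C l) := by
    intro l hl
    induction l with
    | zero => omega
    | succ n ih =>
        rcases Nat.eq_or_lt_of_le hl with h1 | h1
        · -- n + 1 = 1, i.e. n = 0
          have hn : n = 0 := by omega
          subst hn
          have hempty : (∅ : Set X) = ndSet r (∅ : Finset X) := by
            simp [ndSet]
          rw [hA1, hempty, update_nd htrans hirr]
          apply ndSet_congr
          intro x
          rw [Finset.mem_union, List.mem_toFinset, hmemC]
          simp only [Finset.notMem_empty, false_or]
          constructor
          · intro h; exact ⟨1, le_refl _, le_refl _, h⟩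
          · rintro ⟨i, h1, h2, h3⟩
            have : i = 1 := by omega
            subst this; exact h3
        · have hn : 1 ≤ n := by omega
          rw [hAs n hn, ih hn, update_nd htrans hirr]
          apply ndSet_congr
          intro x
          rw [hmemC, Finset.mem_union, hmemC, List.mem_toFinset]
          constructor
          · rintro (⟨i, h1, h2, h3⟩ | h)
            · exact ⟨i, h1, by omega, h3⟩
            · exact ⟨n + 1, by omega, le_refl _, h⟩
          · rintro ⟨i, h1, h2, h3⟩
            rcases Nat.eq_or_lt_of_le h2 with rfl | h2'
            · exact Or.inr h3
            · exact Or.inl ⟨i, h1, by omega, h3⟩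
  rw [key l hl]
  ext x
  simp only [ndSet, Set.mem_setOf_eq, hmemC]
  constructor
  · rintro ⟨h1, h2⟩
    exact ⟨h1, by rintro ⟨y, hy, hyx⟩; exact h2 y hy hyx⟩
  · rintro ⟨h1, h2⟩
    exact ⟨h1, fun y hy hyx => h2 ⟨y, hy, hyx⟩⟩
end

section
/- Let X be a type and ≺ a transitive and irreflexive relation on X. Let A₁ = ArchiveUpdate(P₁, ∅), A_{i+1} = ArchiveUpdate(P_{i+1}, A_i) be the archive sequence generated from finite lists P₁, P₂, … of elements of X. Then the archive never deteriorates: for all l ≤ m and every a ∈ A_l, either a ∈ A_m or there exists a' ∈ A_m with a' ≺ a. -/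
lemma archiveStep_no_det {X : Type*} (r : X → X → Prop)
    (htrans : Transitive r) (hirr : Irreflexive r)
    (A : Set X) (p : X) (a : X) (ha : a ∈ A) :
    a ∈ archiveStep r A p ∨ ∃ b ∈ archiveStep r A p, r b a := by
  by_cases h : r p a
  · by_cases hd : ∀ b ∈ A, ¬ r b p
    · exact Or.inr ⟨p, ⟨Or.inr ⟨rfl, hd⟩, hirr p⟩, h⟩
    · push_neg at hd
      obtain ⟨b, hb, hbp⟩ := hd
      exact Or.inr ⟨b, ⟨Or.inl hb, fun hpb => hirr p (htrans hpb hbp)⟩, htrans hbp h⟩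
  · exact Or.inl ⟨Or.inl ha, h⟩

lemma archiveUpdate_no_det {X : Type*} (r : X → X → Prop)
    (htrans : Transitive r) (hirr : Irreflexive r)
    (P : List X) : ∀ (A : Set X) (a : X), a ∈ A →
    a ∈ archiveUpdate r P A ∨ ∃ b ∈ archiveUpdate r P A, r b a := by
  induction P with
  | nil => exact fun A a ha => Or.inl ha
  | cons p P ih =>
    intro A a ha
    rcases archiveStep_no_det r htrans hirr A p a ha with h | ⟨b, hb, hba⟩
    · exact ih (archiveStep r A p) a h
    · rcases ih (archiveStep r A p) b hb with h | ⟨c, hc, hcb⟩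
      · exact Or.inr ⟨b, h, hba⟩
      · exact Or.inr ⟨c, hc, htrans hcb hba⟩

/-- Non-deterioration of the archive: for `l ≤ m`, every element of the archive
`A l` either is still in `A m` or is dominated by some element of `A m`. -/
theorem archive_no_deterioration {X : Type*} (r : X → X → Prop)
    (htrans : Transitive r) (hirr : Irreflexive r)
    (P : ℕ → List X) (A : ℕ → Set X)
    (hA1 : A 1 = archiveUpdate r (P 1) (∅ : Set X))
    (hAs : ∀ i, 1 ≤ i → A (i + 1) = archiveUpdate r (P (i + 1)) (A i))
    (l m : ℕ) (hl : 1 ≤ l) (hlm : l ≤ m) (a : X) (ha : a ∈ A l) :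
    a ∈ A m ∨ ∃ a' ∈ A m, r a' a := by
  induction m, hlm using Nat.le_induction with
  | base => exact Or.inl ha
  | succ m hlm ih =>
    rw [hAs m (hl.trans hlm)]
    rcases ih with h | ⟨b, hb, hba⟩
    · exact archiveUpdate_no_det r htrans hirr _ _ a h
    · rcases archiveUpdate_no_det r htrans hirr (P (m+1)) (A m) b hb with h | ⟨c, hc, hcb⟩
      · exact Or.inr ⟨b, h, hba⟩
      · exact Or.inr ⟨c, hc, htrans hcb hba⟩
end

section
/- Let S ⊆ (Fin n → ℝ) be nonempty and compact and J : (Fin n → ℝ) → (Fin k → ℝ) continuous. Call x ∈ S Pareto efficient in S if there is no y ∈ S with J(y)ᵢ ≤ J(x)ᵢ for all i and J(y) ≠ J(x). Then the Pareto set is externally stable: for every u ∈ S there exists a Pareto efficient point p ∈ S with J(p)ᵢ ≤ J(u)ᵢ for all i. In particular, the Pareto set of a continuous objective over a nonempty compact set is nonempty, and every non-efficient point is dominated by an efficient point. -/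
/-- External stability of the Pareto set: for a continuous objective
`J : ℝ^n → ℝ^k` over a nonempty compact feasible set `S`, every feasible point
`u` is weakly dominated by some Pareto efficient point `p ∈ S`
(`J p i ≤ J u i` for all `i`).  In particular the Pareto set is nonempty. -/
theorem pareto_externally_stable (n k : ℕ)
    (S : Set (Fin n → ℝ)) (hSne : S.Nonempty) (hScomp : IsCompact S)
    (J : (Fin n → ℝ) → Fin k → ℝ) (hJ : Continuous J)
    (u : Fin n → ℝ) (hu : u ∈ S) :
    ∃ p ∈ S, (¬ ∃ y ∈ S, (∀ i, J y i ≤ J p i) ∧ J y ≠ J p) ∧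
      ∀ i, J p i ≤ J u i := by
  set D : Set (Fin n → ℝ) := {x ∈ S | ∀ i, J x i ≤ J u i} with hD
  have hDne : D.Nonempty := ⟨u, hu, fun i => le_refl _⟩
  have hDclosed : IsClosed D := by
    have : D = S ∩ ⋂ i, {x | J x i ≤ J u i} := by
      ext x; simp [hD, Set.mem_setOf_eq]
    rw [this]
    exact hScomp.isClosed.inter (isClosed_iInter fun i =>
      isClosed_le ((continuous_apply i).comp hJ) continuous_const)
  have hDcomp : IsCompact D := hScomp.of_isClosed_subset hDclosed fun x hx => hx.1
  have hf : Continuous fun x => ∑ i, J x i :=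
    continuous_finset_sum _ fun i _ => (continuous_apply i).comp hJ
  obtain ⟨p, hpD, hpmin⟩ := hDcomp.exists_isMinOn hDne hf.continuousOn
  refine ⟨p, hpD.1, ?_, hpD.2⟩
  rintro ⟨y, hyS, hyle, hyne⟩
  have hyD : y ∈ D := ⟨hyS, fun i => (hyle i).trans (hpD.2 i)⟩
  have hlt : ∑ i, J y i < ∑ i, J p i := by
    obtain ⟨i, hi⟩ : ∃ i, J y i ≠ J p i := Function.ne_iff.mp hyne
    exact Finset.sum_lt_sum (fun i _ => hyle i)
      ⟨i, Finset.mem_univ i, lt_of_le_of_ne (hyle i) hi⟩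
  exact absurd (hpmin hyD) (not_le.mpr hlt)
end
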